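/- arXiv:2605.05593 — 2 statements merged into one kernel-verified Lean document; each statement's English description precedes it below -/
import Mathlib

section
/- Let h be a random vector in ℝ^d and z a {0,1}-valued random variable. Let η(h) = wᵀh + b be a linear predictor and L(η, z) a convex loss function that is monotonically decreasing in η when z = 1 and monotonically increasing in η when z = 0. Let μ₁ = E[h | z=1], μ₀ = E[h | z=0], and δ = μ₁ - μ₀. If wᵀδ ≤ 0, then E[L(η(h), z)] ≥ inf over constants c of E[L(c, z)], i.e., the predictor does no better than the best constant predictor. -/
open MeasureTheory ProbabilityTheory
open scoped RealInnerProductSpace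

/-!
Condition on the label. Given `z = j`, Jensen's inequality bounds the expected loss below by the
loss of the constant `E[η | z = j]`. The hypothesis on `w` says `E[η | z = 1] ≤ E[η | z = 0]`, and
`E[η]` is a convex combination of the two, so it lies between them; by monotonicity of the loss in
each class, the constant predictor `E[η]` does at least as well on both classes, hence overall.
-/

namespace ProbabilityTheory

variable {Ω E : Type*} [MeasurableSpace Ω] {μ : Measure Ω} [NormedAddCommGroup E]

lemma _root_.MeasureTheory.Integrable.cond {f : Ω → E} (hf : Integrable f μ) (s : Set Ω) :
    Integrable f μ[|s] := by
  by_cases hs : μ s = 0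
  · simp [cond_eq_zero_of_meas_eq_zero hs]
  · exact hf.restrict.smul_measure (ENNReal.inv_ne_top.mpr hs)

variable {ι : Type*} [MeasurableSpace ι] {z : Ω → ι}

lemma integrable_cond_fiber {g : Ω → ι → E} (hz : Measurable z) [MeasurableSingletonClass ι]
    (hg : Integrable (fun ω => g ω (z ω)) μ) (j : ι) :
    Integrable (fun ω => g ω j) μ[|z ⁻¹' {j}] :=
  (hg.cond _).congr <| by
    filter_upwards [ae_cond_mem (hz (measurableSet_singleton j))] with ω hω
    rw [hω]

lemma integral_eq_sum_cond_fiber [NormedSpace ℝ E] [Fintype ι] [DiscreteMeasurableSpace ι]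
    [IsFiniteMeasure μ] (hz : Measurable z) {g : Ω → ι → E}
    (hg : Integrable (fun ω => g ω (z ω)) μ) :
    ∫ ω, g ω (z ω) ∂μ = ∑ j, μ.real (z ⁻¹' {j}) • ∫ ω, g ω j ∂μ[|z ⁻¹' {j}] := by
  have hfib := sum_meas_smul_cond_fiber hz μ
  rw [← hfib] at hg
  conv_lhs => rw [← hfib]
  rw [integral_finsetSum_measure ((integrable_finsetSum_measure).mp hg)]
  refine Finset.sum_congr rfl fun j _ => ?_
  rw [integral_smul_measure, measureReal_def]
  congr 1
  refine integral_congr_ae ?_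
  filter_upwards [ae_cond_mem (hz (measurableSet_singleton j))] with ω hω
  rw [hω]

end ProbabilityTheory

lemma integral_inner_add_const {Ω E : Type*} [MeasurableSpace Ω] {ν : Measure Ω}
    [IsProbabilityMeasure ν] [NormedAddCommGroup E] [InnerProductSpace ℝ E] [CompleteSpace E]
    {h : Ω → E} (hh : Integrable h ν) (w : E) (b : ℝ) :
    ∫ ω, ⟪w, h ω⟫ + b ∂ν = ⟪w, ∫ ω, h ω ∂ν⟫ + b := by
  rw [integral_add (hh.const_inner w) (integrable_const b), integral_inner hh, integral_const,
    probReal_univ, one_smul]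

/-- If the linear predictor's weight vector has nonpositive inner product with the
difference of class-conditional means, then its expected convex monotonic loss is at
least the trivially attainable (best constant-predictor) loss. -/
theorem stmt0 {Ω : Type*} [MeasurableSpace Ω] {d : ℕ}
    (μ : Measure Ω) [IsProbabilityMeasure μ]
    (h : Ω → EuclideanSpace ℝ (Fin d)) (z : Ω → Bool)
    (w : EuclideanSpace ℝ (Fin d)) (b : ℝ)
    (L : ℝ → Bool → ℝ)
    (hconv : ∀ j, ConvexOn ℝ Set.univ (fun α => L α j))
    (hanti : Antitone fun α => L α true)
    (hmono : Monotone fun α => L α false)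
    (hz : Measurable z)
    (hh : Integrable h μ)
    (hp1 : 0 < μ (z ⁻¹' {true})) (hp0 : 0 < μ (z ⁻¹' {false}))
    (hLint : Integrable (fun ω => L (⟪w, h ω⟫ + b) (z ω)) μ)
    (hLcint : ∀ c : ℝ, Integrable (fun ω => L c (z ω)) μ)
    (hδ : ⟪w, (∫ ω, h ω ∂(μ[|z ⁻¹' {true}])) - (∫ ω, h ω ∂(μ[|z ⁻¹' {false}]))⟫ ≤ 0) :
    ∀ ℓ : ℝ, (∀ c : ℝ, ℓ ≤ ∫ ω, L c (z ω) ∂μ) →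
      ℓ ≤ ∫ ω, L (⟪w, h ω⟫ + b) (z ω) ∂μ := by
  intro ℓ hℓ
  set η : Ω → ℝ := fun ω => ⟪w, h ω⟫ + b
  set p : Bool → ℝ := fun j => μ.real (z ⁻¹' {j})
  set m : Bool → ℝ := fun j => ∫ ω, η ω ∂μ[|z ⁻¹' {j}]
  have hν (j : Bool) : IsProbabilityMeasure μ[|z ⁻¹' {j}] :=
    cond_isProbabilityMeasure (by cases j <;> positivity)
  have hηint : Integrable η μ := (hh.const_inner w).add (integrable_const b)
  have hm : m true ≤ m false := by
    simp only [m, η, integral_inner_add_const (hh.cond _), add_le_add_iff_right]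
    simpa [inner_sub_right] using hδ
  have hp : p true + p false = 1 := by
    have := integral_eq_sum_cond_fiber (μ := μ) (g := fun _ _ => (1 : ℝ)) hz (integrable_const 1)
    simpa [Fintype.sum_bool] using this.symm
  have hmean : ∫ ω, η ω ∂μ ∈ Set.Icc (m true) (m false) := by
    rw [integral_eq_sum_cond_fiber (g := fun ω _ => η ω) hz hηint, Fintype.sum_bool]
    exact convex_Icc _ _ ⟨le_rfl, hm⟩ ⟨hm, le_rfl⟩ measureReal_nonneg measureReal_nonneg hp
  have hclass (j : Bool) : L (∫ ω, η ω ∂μ) j ≤ ∫ ω, L (η ω) j ∂μ[|z ⁻¹' {j}] := calc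
    L (∫ ω, η ω ∂μ) j ≤ L (m j) j := by
      cases j
      · exact hmono hmean.2
      · exact hanti hmean.1
    _ ≤ ∫ ω, L (η ω) j ∂μ[|z ⁻¹' {j}] :=
      (hconv j).map_integral_le ((hconv j).continuousOn isOpen_univ) isClosed_univ
        (ae_of_all _ fun _ => Set.mem_univ _) (hηint.cond _)
        (integrable_cond_fiber (g := fun ω j => L (η ω) j) hz hLint j)
  calc ℓ ≤ ∫ ω, L (∫ ω, η ω ∂μ) (z ω) ∂μ := hℓ _
    _ = ∑ j, p j • ∫ _, L (∫ ω, η ω ∂μ) j ∂μ[|z ⁻¹' {j}] :=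
      integral_eq_sum_cond_fiber hz (hLcint _)
    _ ≤ ∑ j, p j • ∫ ω, L (η ω) j ∂μ[|z ⁻¹' {j}] := by
      refine Finset.sum_le_sum fun j _ => smul_le_smul_of_nonneg_left ?_ measureReal_nonneg
      simpa using hclass j
    _ = ∫ ω, L (η ω) (z ω) ∂μ := (integral_eq_sum_cond_fiber hz hLint).symm
end

section
/- Under the hypotheses above, any admissible linear predictor η(h) = wᵀh + b (one whose expected loss is strictly less than the trivially attainable loss L_τ) for a convex monotonic loss satisfies wᵀδ > 0, where δ = μ₁ - μ₀ is the difference of class-conditional means. -/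
open MeasureTheory ProbabilityTheory
open scoped RealInnerProductSpace

/-- Any admissible linear predictor (one whose expected convex monotonic loss is
strictly below the trivially attainable loss, i.e. strictly below some lower bound of
all constant-predictor losses) satisfies ⟨w, δ⟩ > 0, where δ = μ₁ - μ₀. -/
theorem stmt1 {Ω : Type*} [MeasurableSpace Ω] {d : ℕ}
    (μ : Measure Ω) [IsProbabilityMeasure μ]
    (h : Ω → EuclideanSpace ℝ (Fin d)) (z : Ω → Bool)
    (w : EuclideanSpace ℝ (Fin d)) (b : ℝ)
    (L : ℝ → Bool → ℝ)
    (hconv : ∀ j, ConvexOn ℝ Set.univ (fun α => L α j))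
    (hanti : Antitone fun α => L α true)
    (hmono : Monotone fun α => L α false)
    (hz : Measurable z)
    (hh : Integrable h μ)
    (hp1 : 0 < μ (z ⁻¹' {true})) (hp0 : 0 < μ (z ⁻¹' {false}))
    (hLint : Integrable (fun ω => L (⟪w, h ω⟫ + b) (z ω)) μ)
    (hLcint : ∀ c : ℝ, Integrable (fun ω => L c (z ω)) μ)
    (hadm : ∃ Lτ : ℝ, (∀ c : ℝ, Lτ ≤ ∫ ω, L c (z ω) ∂μ) ∧
      (∫ ω, L (⟪w, h ω⟫ + b) (z ω) ∂μ) < Lτ) :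
    0 < ⟪w, (∫ ω, h ω ∂(μ[|z ⁻¹' {true}])) - (∫ ω, h ω ∂(μ[|z ⁻¹' {false}]))⟫ := by
  classical
  have hcompl : z ⁻¹' {false} = (z ⁻¹' {true})ᶜ := by
    ext ω; cases hzb : z ω <;> simp [hzb]
  set A : Set Ω := z ⁻¹' {true} with hAdef
  have hA : MeasurableSet A := hz (measurableSet_singleton true)
  have hμA : μ A ≠ 0 := hp1.ne'
  have hμAc : μ Aᶜ ≠ 0 := by rw [← hcompl]; exact hp0.ne'
  have hμAtop : μ A ≠ ⊤ := measure_ne_top μ A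
  have hμActop : μ Aᶜ ≠ ⊤ := measure_ne_top μ Aᶜ
  rw [hcompl]
  set ν1 := μ[|A] with hν1def
  set ν0 := μ[|Aᶜ] with hν0def
  haveI : IsProbabilityMeasure ν1 := cond_isProbabilityMeasure hμA
  haveI : IsProbabilityMeasure ν0 := cond_isProbabilityMeasure hμAc
  set p1 : ℝ := (μ A).toReal with hp1def
  set p0 : ℝ := (μ Aᶜ).toReal with hp0def
  have hp1pos : 0 < p1 := ENNReal.toReal_pos hμA hμAtop
  have hp0pos : 0 < p0 := ENNReal.toReal_pos hμAc hμActop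
  have hinv1 : (μ A)⁻¹ ≠ ⊤ := by simp [hμA]
  have hinv0 : (μ Aᶜ)⁻¹ ≠ ⊤ := by simp [hμAc]
  have hhν1 : Integrable h ν1 := (hh.restrict (s := A)).smul_measure hinv1
  have hhν0 : Integrable h ν0 := (hh.restrict (s := Aᶜ)).smul_measure hinv0
  set m1 := ∫ ω, h ω ∂ν1 with hm1def
  set m0 := ∫ ω, h ω ∂ν0 with hm0def
  by_contra hle
  push_neg at hle
  have hwm : ⟪w, m1⟫ ≤ ⟪w, m0⟫ := by
    rw [inner_sub_right] at hle; linarith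
  set f : Ω → ℝ := fun ω => ⟪w, h ω⟫ + b with hfdef
  have hfint : ∀ (ν : Measure Ω) [IsFiniteMeasure ν], Integrable h ν → Integrable f ν :=
    fun ν _ hν => (hν.const_inner w).add (integrable_const b)
  have hcond : ∀ (s : Set Ω) (g : Ω → ℝ), μ s ≠ 0 →
      ∫ ω in s, g ω ∂μ = (μ s).toReal * ∫ ω, g ω ∂(μ[|s]) := by
    intro s g hs
    rw [ProbabilityTheory.cond, integral_smul_measure, ENNReal.toReal_inv, smul_eq_mul,
      ← mul_assoc, mul_inv_cancel₀ (ENNReal.toReal_ne_zero.mpr ⟨hs, measure_ne_top μ s⟩), one_mul]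
  have hz1 : ∀ᵐ ω ∂(μ.restrict A), z ω = true := by
    filter_upwards [ae_restrict_mem hA] with ω hω using hω
  have hz0 : ∀ᵐ ω ∂(μ.restrict Aᶜ), z ω = false := by
    filter_upwards [ae_restrict_mem hA.compl] with ω hω
    exact Bool.eq_false_iff.mpr (by rw [hAdef] at hω; simpa using hω)
  have hdecomp : ∀ (q : Ω → ℝ), Integrable (fun ω => L (q ω) (z ω)) μ →
      ∫ ω, L (q ω) (z ω) ∂μ
        = p1 * ∫ ω, L (q ω) true ∂ν1 + p0 * ∫ ω, L (q ω) false ∂ν0 := by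
    intro q hq
    have e1 : ∫ ω in A, L (q ω) (z ω) ∂μ = ∫ ω in A, L (q ω) true ∂μ :=
      integral_congr_ae (hz1.mono fun ω hω => by simp only [hω])
    have e0 : ∫ ω in Aᶜ, L (q ω) (z ω) ∂μ = ∫ ω in Aᶜ, L (q ω) false ∂μ :=
      integral_congr_ae (hz0.mono fun ω hω => by simp only [hω])
    rw [← integral_add_compl hA hq, e1, e0, hcond A _ hμA, hcond Aᶜ _ hμAc]
  -- integrability of L ∘ f on each conditional measure
  have hLf1 : Integrable (fun ω => L (f ω) true) ν1 := by
    have : Integrable (fun ω => L (f ω) (z ω)) (μ.restrict A) := hLint.restrict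
    exact (this.congr (hz1.mono fun ω hω => by simp only [hω])).smul_measure hinv1
  have hLf0 : Integrable (fun ω => L (f ω) false) ν0 := by
    have : Integrable (fun ω => L (f ω) (z ω)) (μ.restrict Aᶜ) := hLint.restrict
    exact (this.congr (hz0.mono fun ω hω => by simp only [hω])).smul_measure hinv0
  -- Jensen on each class
  have hcont : ∀ j, ContinuousOn (fun α => L α j) Set.univ := by
    intro j
    have := (hconv j).continuousOn_interior
    rwa [interior_univ] at this
  have hfmean : ∀ (ν : Measure Ω) [IsProbabilityMeasure ν] (hν : Integrable h ν),
      ∫ ω, f ω ∂ν = ⟪w, ∫ ω, h ω ∂ν⟫ + b := by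
    intro ν _ hν
    rw [hfdef]
    rw [integral_add (hν.const_inner w) (integrable_const b), integral_const,
      integral_inner hν]
    simp
  have jensen : ∀ (ν : Measure Ω) [IsProbabilityMeasure ν] (j : Bool)
      (hν : Integrable h ν) (hLν : Integrable (fun ω => L (f ω) j) ν),
      L (∫ ω, f ω ∂ν) j ≤ ∫ ω, L (f ω) j ∂ν := by
    intro ν _ j hν hLν
    exact (hconv j).map_integral_le (hcont j) isClosed_univ
      (Filter.Eventually.of_forall fun ω => Set.mem_univ _) (hfint ν hν) hLν
  have j1 : L (⟪w, m1⟫ + b) true ≤ ∫ ω, L (f ω) true ∂ν1 := by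
    have := jensen ν1 true hhν1 hLf1
    rwa [hfmean ν1 hhν1] at this
  have j0 : L (⟪w, m0⟫ + b) false ≤ ∫ ω, L (f ω) false ∂ν0 := by
    have := jensen ν0 false hhν0 hLf0
    rwa [hfmean ν0 hhν0] at this
  -- constant predictor c
  set c : ℝ := ⟪w, m0⟫ + b with hcdef
  have j1' : L c true ≤ ∫ ω, L (f ω) true ∂ν1 :=
    le_trans (hanti (by rw [hcdef]; linarith)) j1
  -- expected loss of constant c
  obtain ⟨Lτ, hLτ, hlt⟩ := hadm
  have hconstdecomp : ∫ ω, L c (z ω) ∂μ = p1 * L c true + p0 * L c false := by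
    have := hdecomp (fun _ => c) (hLcint c)
    simpa [integral_const] using this
  have hmain : ∫ ω, L (f ω) (z ω) ∂μ ≥ ∫ ω, L c (z ω) ∂μ := by
    rw [hdecomp f hLint, hconstdecomp]
    have t1 : p1 * L c true ≤ p1 * ∫ ω, L (f ω) true ∂ν1 :=
      mul_le_mul_of_nonneg_left j1' hp1pos.le
    have t0 : p0 * L c false ≤ p0 * ∫ ω, L (f ω) false ∂ν0 :=
      mul_le_mul_of_nonneg_left j0 hp0pos.le
    linarith
  exact absurd (lt_of_lt_of_le hlt (le_trans (hLτ c) hmain)) (lt_irrefl _)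
end
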